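/- arXiv:2005.07487 — 3 statements merged into one kernel-verified Lean document; each statement's English description precedes it below -/
import Mathlib

section
/- For N ≥ 2, the sum over j = 1,...,N-1 of (1 - q_j)/|1 - q_j|^3, where q_j = e^{2πij/N} are the N-th roots of unity, equals (1/4) · Σ_{j=1}^{N-1} csc(jπ/N). In particular the sum is a real number. -/
/-!
Pair `q_j` with `q_{N-j} = conj q_j`. For `w = 1 - q` with `‖q‖ = 1` one has `2 Re w = ‖w‖²`,
so `w / ‖w‖³ + conj w / ‖w‖³ = 1 / ‖w‖`; summing over the pairs counts every term twice, and
`‖1 - q_j‖ = 2 sin (jπ/N)`.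
-/

open Complex Finset Real
open scoped ComplexConjugate

namespace Complex

theorem norm_one_sub_conj (z : ℂ) : ‖1 - conj z‖ = ‖1 - z‖ := by
  simpa using norm_conj (1 - z)

theorem one_sub_div_norm_pow_three_add_conj {q : ℂ} (hq : ‖q‖ = 1) :
    (1 - q) / ‖1 - q‖ ^ 3 + (1 - conj q) / ‖1 - conj q‖ ^ 3 = ((1 / ‖1 - q‖ : ℝ) : ℂ) := by
  have hre : 2 * (1 - q).re = ‖1 - q‖ ^ 2 := by
    rw [norm_sub_rev, norm_sub_one_sq_eq_of_norm_eq_one hq, sub_re, one_re]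
  have hconj : 1 - conj q = conj (1 - q) := by simp
  rw [norm_one_sub_conj, ← add_div, hconj, add_conj, hre]
  rcases eq_or_ne ‖1 - q‖ 0 with h | h
  · simp [h]
  · push_cast
    field_simp

theorem norm_one_sub_exp_two_mul_I {θ : ℝ} (h₀ : 0 ≤ θ) (hπ : θ ≤ π) :
    ‖1 - exp (2 * θ * I)‖ = 2 * Real.sin θ := by
  rw [norm_sub_rev, mul_comm _ I, ← ofReal_ofNat, ← ofReal_mul, norm_exp_I_mul_ofReal_sub_one,
    mul_div_cancel_left₀ _ two_ne_zero,
    Real.norm_of_nonneg (mul_nonneg zero_le_two (sin_nonneg_of_nonneg_of_le_pi h₀ hπ))]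

theorem conj_exp_two_pi_I_mul_div {N j : ℕ} (hN : N ≠ 0) (hj : j ≤ N) :
    conj (exp (2 * π * I * j / N)) = exp (2 * π * I * ↑(N - j) / N) := by
  have harg : 2 * π * I * ↑(N - j) / N = conj (2 * π * I * j / N) + 2 * π * I := by
    simp only [map_div₀, map_mul, conj_I, conj_ofReal, map_ofNat, conj_natCast]
    rw [Nat.cast_sub hj]
    field_simp
    ring
  rw [← exp_conj, harg, exp_periodic]

end Complex

theorem sum_roots_of_unity_csc_general (N : ℕ)
    (q : ℕ → ℂ) (hq : ∀ j, q j = Complex.exp (2 * Real.pi * Complex.I * j / N)) :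
    ∑ j ∈ Finset.Ico 1 N, (1 - q j) / (‖1 - q j‖)^3
      = (((1/4 : ℝ) * ∑ j ∈ Finset.Ico 1 N, 1 / Real.sin (j * Real.pi / N) : ℝ) : ℂ) := by
  have hq' : ∀ j, q j = exp (2 * ↑(j * π / N : ℝ) * I) := fun j => by
    rw [hq]; push_cast; ring_nf
  have hunit : ∀ j, ‖q j‖ = 1 := fun j => by simp [hq', norm_exp]
  have hconj : ∀ j ∈ Ico 1 N, q (N - j) = conj (q j) := fun j hj => by
    obtain ⟨-, hjN⟩ := mem_Ico.mp hj
    rw [hq, hq, conj_exp_two_pi_I_mul_div (by omega) hjN.le]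
  have hnorm : ∀ j ∈ Ico 1 N, ‖1 - q j‖ = 2 * Real.sin (j * π / N) := fun j hj => by
    obtain ⟨-, hjN⟩ := mem_Ico.mp hj
    rw [hq', norm_one_sub_exp_two_mul_I (by positivity)]
    rw [div_le_iff₀ (Nat.cast_pos.mpr (by omega)), mul_comm]
    gcongr
  have hreflect : ∑ j ∈ Ico 1 N, (1 - q (N - j)) / ‖1 - q (N - j)‖ ^ 3
      = ∑ j ∈ Ico 1 N, (1 - q j) / ‖1 - q j‖ ^ 3 := by
    simpa using sum_Ico_reflect (fun j => (1 - q j) / (‖1 - q j‖ : ℂ) ^ 3) 1 N.le_succ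
  calc ∑ j ∈ Ico 1 N, (1 - q j) / (‖1 - q j‖ : ℂ) ^ 3
      = (1 / 2) * ∑ j ∈ Ico 1 N,
          ((1 - q j) / ‖1 - q j‖ ^ 3 + (1 - q (N - j)) / ‖1 - q (N - j)‖ ^ 3) := by
        rw [sum_add_distrib, hreflect]
        ring
    _ = (1 / 2) * ∑ j ∈ Ico 1 N, ((1 / (2 * Real.sin (j * π / N)) : ℝ) : ℂ) := by
        refine congrArg _ (sum_congr rfl fun j hj => ?_)
        rw [hconj j hj, one_sub_div_norm_pow_three_add_conj (hunit j), hnorm j hj]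
    _ = _ := by
        push_cast
        rw [mul_sum, mul_sum]
        refine sum_congr rfl fun j _ => ?_
        ring

/-- For `N ≥ 2`, `∑_{j=1}^{N-1} (1 - q_j)/|1 - q_j|³ = (1/4) ∑_{j=1}^{N-1} csc(jπ/N)`,
where `q_j = exp(2πij/N)`; in particular the sum is a real number. -/
theorem sum_roots_of_unity_csc (N : ℕ) (hN : 2 ≤ N)
    (q : ℕ → ℂ) (hq : ∀ j, q j = Complex.exp (2 * Real.pi * Complex.I * j / N)) :
    ∑ j ∈ Finset.Ico 1 N, (1 - q j) / (‖1 - q j‖)^3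
      = (((1/4 : ℝ) * ∑ j ∈ Finset.Ico 1 N, 1 / Real.sin (j * Real.pi / N) : ℝ) : ℂ) :=
  sum_roots_of_unity_csc_general N q hq
end

section
/- For odd N ≥ 5: if b_1, a_2, b_2, a_3, b_3 are real numbers such that b_2 cos(2jπ/N) − a_2 sin(2jπ/N) + (−1)^j (b_3 cos(jπ/N) − a_3 sin(jπ/N)) + b_1 = 0 for all j = 1, 2, ..., N, then b_1 = b_2 = b_3 = a_2 = a_3 = 0. -/
open Real

/-! For `θ = jπ/N` the reflection `j ↦ N - j` sends `θ` to `π - θ` and, `N` being odd, flips the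
sign `(-1)^j`; the sum and difference of the two equations separate the `b`-coefficients from the
`a`-coefficients. Taking `j = 1, 2` and `j = N` leaves a linear system in `t = π/N` which is
nondegenerate as long as `cos t + cos 2t ≠ 0`: this holds for `N ≥ 5` and fails for `N = 3`. -/

noncomputable def trigCombination (b₁ a₂ b₂ a₃ b₃ ε θ : ℝ) : ℝ :=
  b₂ * cos (2 * θ) - a₂ * sin (2 * θ) + ε * (b₃ * cos θ - a₃ * sin θ) + b₁

section

variable {b₁ a₂ b₂ a₃ b₃ : ℝ}

theorem trigCombination_pi_sub (ε θ : ℝ) :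
    trigCombination b₁ a₂ b₂ a₃ b₃ (-ε) (π - θ) =
      b₂ * cos (2 * θ) + a₂ * sin (2 * θ) + ε * (b₃ * cos θ + a₃ * sin θ) + b₁ := by
  have h2 : 2 * (π - θ) = -(2 * θ) + 2 * π := by ring
  simp only [trigCombination, h2, cos_add_two_pi, sin_add_two_pi, cos_neg, sin_neg, cos_pi_sub,
    sin_pi_sub]
  ring

theorem coeff_relations_of_trigCombination_eq_zero {ε θ : ℝ} (hθ : sin θ ≠ 0)
    (h : trigCombination b₁ a₂ b₂ a₃ b₃ ε θ = 0)
    (h' : trigCombination b₁ a₂ b₂ a₃ b₃ (-ε) (π - θ) = 0) :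
    2 * a₂ * cos θ + ε * a₃ = 0 ∧ b₂ * cos (2 * θ) + ε * b₃ * cos θ + b₁ = 0 := by
  rw [trigCombination_pi_sub] at h'
  rw [trigCombination] at h
  rw [sin_two_mul] at h h'
  constructor
  · have hsin : sin θ * (2 * a₂ * cos θ + ε * a₃) = 0 := by linear_combination (h' - h) / 2
    exact (mul_eq_zero.1 hsin).resolve_left hθ
  · linear_combination (h + h') / 2

theorem neg_one_pow_sub_of_odd {N j : ℕ} (hN : Odd N) (hj : j ≤ N) :
    (-1 : ℝ) ^ (N - j) = -(-1) ^ j := by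
  rcases Nat.even_or_odd j with hj' | hj'
  · rw [(Nat.Odd.sub_even hj hN hj').neg_one_pow, hj'.neg_one_pow]
  · rw [(Nat.Odd.sub_odd hN hj').neg_one_pow, hj'.neg_one_pow, neg_neg]

theorem trigCombination_eq_zero_of_forall {N : ℕ}
    (h : ∀ j : ℕ, 1 ≤ j → j ≤ N →
      b₂ * Real.cos (2 * j * Real.pi / N) - a₂ * Real.sin (2 * j * Real.pi / N)
        + (-1 : ℝ) ^ j * (b₃ * Real.cos (j * Real.pi / N) - a₃ * Real.sin (j * Real.pi / N))
        + b₁ = 0)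
    {j : ℕ} (hj : 1 ≤ j) (hjN : j ≤ N) :
    trigCombination b₁ a₂ b₂ a₃ b₃ ((-1) ^ j) (j * (π / N)) = 0 := by
  simpa only [trigCombination, mul_div_assoc, mul_assoc] using h j hj hjN

theorem coeff_relations_of_odd {N : ℕ} (hOdd : Odd N)
    (h : ∀ j : ℕ, 1 ≤ j → j ≤ N →
      trigCombination b₁ a₂ b₂ a₃ b₃ ((-1) ^ j) (j * (π / N)) = 0)
    {j : ℕ} (hj : 1 ≤ j) (hjN : j < N) :
    2 * a₂ * cos (j * (π / N)) + (-1) ^ j * a₃ = 0 ∧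
      b₂ * cos (2 * (j * (π / N))) + (-1) ^ j * b₃ * cos (j * (π / N)) + b₁ = 0 := by
  have hN : (0 : ℝ) < N := by exact_mod_cast (by omega : 0 < N)
  have hθ : 0 < j * (π / N) := mul_pos (by exact_mod_cast hj) (by positivity)
  have hθπ : j * (π / N) < π := by
    rw [← mul_div_assoc, div_lt_iff₀ hN, mul_comm]
    gcongr
  refine coeff_relations_of_trigCombination_eq_zero (sin_pos_of_pos_of_lt_pi hθ hθπ).ne'
    (h j hj hjN.le) ?_
  have hreflect : ((N - j : ℕ) : ℝ) * (π / N) = π - j * (π / N) := by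
    rw [Nat.cast_sub hjN.le]
    field_simp
  rw [← neg_one_pow_sub_of_odd hOdd hjN.le, ← hreflect]
  exact h (N - j) (by omega) (by omega)

theorem coeffs_eq_zero_of_coeff_relations {t : ℝ} (hcos : 0 < cos t + cos (2 * t))
    (hc₁ : cos t ≠ -1) (hc₂ : cos (2 * t) ≠ 1)
    (ha₁ : 2 * a₂ * cos t - a₃ = 0) (ha₂ : 2 * a₂ * cos (2 * t) + a₃ = 0)
    (hb₀ : b₂ + b₃ + b₁ = 0)
    (hb₁ : b₂ * cos (2 * t) - b₃ * cos t + b₁ = 0)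
    (hb₂ : b₂ * cos (2 * (2 * t)) + b₃ * cos (2 * t) + b₁ = 0) :
    b₁ = 0 ∧ b₂ = 0 ∧ b₃ = 0 ∧ a₂ = 0 ∧ a₃ = 0 := by
  have ha₂ : a₂ = 0 := by
    have : 2 * a₂ * (cos t + cos (2 * t)) = 0 := by linear_combination ha₁ + ha₂
    simpa [hcos.ne'] using this
  have hb₃₁ : b₃ = 2 * b₂ * (cos t - 1) := by
    have : (cos t + 1) * (2 * b₂ * (cos t - 1) - b₃) = 0 := by
      rw [cos_two_mul] at hb₁
      linear_combination hb₁ - hb₀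
    linear_combination -(mul_eq_zero.1 this).resolve_left (fun h ↦ hc₁ (by linarith))
  have hb₃₂ : b₃ = -2 * b₂ * (cos (2 * t) + 1) := by
    have : (cos (2 * t) - 1) * (2 * b₂ * (cos (2 * t) + 1) + b₃) = 0 := by
      rw [cos_two_mul (2 * t)] at hb₂
      linear_combination hb₂ - hb₀
    linear_combination (mul_eq_zero.1 this).resolve_left (sub_ne_zero.2 hc₂)
  have hb₂ : b₂ = 0 := by
    have : 2 * b₂ * (cos t + cos (2 * t)) = 0 := by linear_combination hb₃₂ - hb₃₁
    simpa [hcos.ne'] using this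
  refine ⟨?_, hb₂, ?_, ha₂, ?_⟩ <;> subst ha₂ hb₂ <;> linarith

end

/-- For odd `N ≥ 5`: if
`b₂ cos(2jπ/N) − a₂ sin(2jπ/N) + (−1)^j (b₃ cos(jπ/N) − a₃ sin(jπ/N)) + b₁ = 0`
for all `j = 1, …, N`, then `b₁ = b₂ = b₃ = a₂ = a₃ = 0`. -/
theorem odd_case_coeffs_zero (N : ℕ) (hN : 5 ≤ N) (hOdd : Odd N)
    (b₁ a₂ b₂ a₃ b₃ : ℝ)
    (h : ∀ j : ℕ, 1 ≤ j → j ≤ N →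
      b₂ * Real.cos (2 * j * Real.pi / N) - a₂ * Real.sin (2 * j * Real.pi / N)
        + (-1 : ℝ) ^ j * (b₃ * Real.cos (j * Real.pi / N) - a₃ * Real.sin (j * Real.pi / N))
        + b₁ = 0) :
    b₁ = 0 ∧ b₂ = 0 ∧ b₃ = 0 ∧ a₂ = 0 ∧ a₃ = 0 := by
  replace h := fun j ↦ trigCombination_eq_zero_of_forall h (j := j)
  obtain ⟨ha₁, hb₁⟩ := coeff_relations_of_odd hOdd h (j := 1) le_rfl (by omega)
  obtain ⟨ha₂, hb₂⟩ := coeff_relations_of_odd hOdd h (j := 2) one_le_two (by omega)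
  have hb₀ : b₂ + b₃ + b₁ = 0 := by
    have hπ := h N (by omega) le_rfl
    rw [mul_div_cancel₀ _ (by positivity), trigCombination, hOdd.neg_one_pow] at hπ
    simpa using hπ
  set t := π / N
  have ht : 0 < t := by positivity
  have ht5 : t ≤ π / 5 := div_le_div_of_nonneg_left pi_pos.le (by norm_num) (by exact_mod_cast hN)
  have hc₁ : 0 < cos t := cos_pos_of_mem_Ioo ⟨by linarith, by linarith⟩
  have hc₂ : 0 < cos (2 * t) := cos_pos_of_mem_Ioo ⟨by linarith, by linarith⟩
  have hc₂' : cos (2 * t) ≠ 1 :=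
    (cos_eq_one_iff_of_lt_of_lt (by linarith) (by linarith)).not.2 (by positivity)
  norm_num at ha₁ hb₁ ha₂ hb₂
  exact coeffs_eq_zero_of_coeff_relations (add_pos hc₁ hc₂) (by linarith) hc₂' (by linarith)
    ha₂ hb₀ (by linarith) hb₂
end

section
/- Let m_1, m_2, m_3, m_4 be positive reals, q_1 = e^{2πi/3}, q_2 = e^{4πi/3}, q_3 = 1, and suppose there exist ω > 0 and c_0 ∈ ℂ with c_0 = (m_1 q_1 + m_2 q_2 + m_3 q_3)/(m_1+m_2+m_3+m_4) such that the central configuration equations Σ_{j≠k, 1≤j≤4} m_j (x_j − x_k)/|x_j − x_k|³ = −ω²(x_k − c_0) hold for k = 1,2,3,4, where x_j = q_j for j ≤ 3 and x_4 = 0. Then m_1 = m_2 = m_3. -/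
/-!
With `S = m₁q₁ + m₂q₂ + m₃` and `M = m₁ + m₂ + m₃ + m₄`, the equation at the central body reads
`S = ω²c₀ = ω²S/M`. If `S ≠ 0` this forces `ω² = M`, and then the equation at the vertex `1`
collapses to `V/(√3)³ = V` for `V = m₁(q₁ - 1) + m₂(q₂ - 1)`; but `Re V = -3(m₁ + m₂)/2 < 0`.
So `S = 0`, and since `q₂ = q̄₁`, the real and imaginary parts of `S = 0` give `m₁ = m₂ = m₃`.
-/

open Complex Finset
open scoped Real ComplexConjugate

local notation "ζ₃" => cexp (2 * π * I / 3)

lemma exp_two_pi_mul_I_div_three_re : (ζ₃).re = -1 / 2 := by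
  have h : 2 * π * I / 3 = (π - π / 3 : ℝ) * I := by push_cast; ring
  rw [h, exp_ofReal_mul_I_re, Real.cos_pi_sub, Real.cos_pi_div_three]
  norm_num

lemma exp_two_pi_mul_I_div_three_im : (ζ₃).im = √3 / 2 := by
  have h : 2 * π * I / 3 = (π - π / 3 : ℝ) * I := by push_cast; ring
  rw [h, exp_ofReal_mul_I_im, Real.sin_pi_sub, Real.sin_pi_div_three]

lemma exp_four_pi_mul_I_div_three : cexp (4 * π * I / 3) = conj ζ₃ := by
  have h : 4 * π * I / 3 = conj (2 * π * I / 3) + 2 * π * I := by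
    simp only [map_div₀, map_mul, conj_ofReal, conj_I, map_ofNat]; ring
  rw [← exp_conj, h, exp_add, exp_two_pi_mul_I, mul_one]

lemma norm_exp_two_pi_mul_I_div_three : ‖ζ₃‖ = 1 := by
  rw [norm_eq_sqrt_sq_add_sq, exp_two_pi_mul_I_div_three_re, exp_two_pi_mul_I_div_three_im]
  norm_num [div_pow]

lemma norm_exp_two_pi_mul_I_div_three_sub_one : ‖ζ₃ - 1‖ = √3 := by
  rw [norm_eq_sqrt_sq_add_sq, sub_re, sub_im, exp_two_pi_mul_I_div_three_re,
    exp_two_pi_mul_I_div_three_im, one_re, one_im, sub_zero]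
  norm_num [div_pow]

lemma norm_conj_sub_one (z : ℂ) : ‖conj z - 1‖ = ‖z - 1‖ := by
  rw [← norm_conj, map_sub, conj_conj, map_one]

section ConjugatePair

variable {z : ℂ} {a b c : ℝ}

lemma eq_and_eq_of_mul_add_mul_conj_add_eq_zero (hre : z.re = -1 / 2) (him : z.im ≠ 0)
    (h : (a : ℂ) * z + b * conj z + c = 0) : a = b ∧ b = c := by
  have h_re : a * (-1 / 2) + b * (-1 / 2) + c = 0 := by simpa [hre] using congrArg re h
  have h_im : (a - b) * z.im = 0 := by
    linear_combination (by simpa using congrArg im h : a * z.im + -(b * z.im) = 0)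
  have hab : a = b := sub_eq_zero.1 ((mul_eq_zero.1 h_im).resolve_right him)
  exact ⟨hab, by linarith⟩

lemma mul_sub_one_add_mul_conj_sub_one_ne_zero (hre : z.re ≠ 1) (hab : a + b ≠ 0) :
    (a : ℂ) * (z - 1) + b * (conj z - 1) ≠ 0 := by
  intro h
  have h_re : (a + b) * (z.re - 1) = 0 := by simpa [add_mul] using congrArg re h
  exact mul_ne_zero hab (sub_ne_zero.2 hre) h_re

end ConjugatePair

/-- The equations at the central body and at the vertex `1`, for masses `a, b, c` at
`q₁, q₂, 1`, mass `d` at the origin, `w = ω²` and `r = |qᵢ - 1|³`. -/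
lemma eq_zero_or_eq_zero_of_central_configuration {K : Type*} [Field K]
    {a b c d q₁ q₂ w c₀ r : K} (hr : r ≠ 1)
    (hc₀ : c₀ = (a * q₁ + b * q₂ + c) / (a + b + c + d))
    (h_origin : a * q₁ + b * q₂ + c = w * c₀)
    (h_vertex : (a * (q₁ - 1) + b * (q₂ - 1)) / r - d = -(w * (1 - c₀))) :
    a * q₁ + b * q₂ + c = 0 ∨ a * (q₁ - 1) + b * (q₂ - 1) = 0 := by
  set S := a * q₁ + b * q₂ + c
  set M := a + b + c + d
  set V := a * (q₁ - 1) + b * (q₂ - 1)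
  refine or_iff_not_imp_left.2 fun hS ↦ ?_
  have hM : M ≠ 0 := by
    rintro hM
    rw [hM, div_zero] at hc₀
    rw [hc₀, mul_zero] at h_origin
    exact hS h_origin
  have hw : w = M := by
    rw [hc₀, mul_div_assoc', eq_div_iff hM] at h_origin
    exact (mul_right_cancel₀ hS (by linear_combination h_origin)).symm
  have hV : V / r = V := by
    rw [hw, hc₀] at h_vertex
    field_simp at h_vertex
    linear_combination h_vertex
  by_contra hV0
  rw [div_eq_mul_inv, mul_eq_left₀ hV0, inv_eq_one] at hV
  exact hr hV

theorem four_body_equal_masses_general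
    (q₁ q₂ : ℂ)
    (hq₁ : q₁ = Complex.exp (2 * Real.pi * Complex.I / 3))
    (hq₂ : q₂ = Complex.exp (4 * Real.pi * Complex.I / 3))
    (m : Fin 4 → ℝ) (hm : ∀ j, 0 < m j)
    (x : Fin 4 → ℂ) (hx : x = ![q₁, q₂, 1, 0])
    (ω : ℝ)
    (c₀ : ℂ)
    (hc₀ : c₀ = ((m 0 : ℂ) * q₁ + (m 1 : ℂ) * q₂ + (m 2 : ℂ) * 1)
        / ((m 0 : ℝ) + m 1 + m 2 + m 3 : ℝ))
    (hcc : ∀ k : Fin 4,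
      ∑ j ∈ Finset.univ.erase k,
          (m j : ℂ) * (x j - x k) / (‖x j - x k‖)^3
        = -((ω : ℂ)^2) * (x k - c₀)) :
    m 0 = m 1 ∧ m 1 = m 2 := by
  subst hx hq₁ hq₂
  rw [exp_four_pi_mul_I_div_three] at hc₀ hcc
  push_cast [mul_one] at hc₀
  have h_origin : (m 0 : ℂ) * ζ₃ + m 1 * conj ζ₃ + m 2 = ω ^ 2 * c₀ := by
    have h := hcc 3
    rw [sum_erase _ (by simp), Fin.sum_univ_four] at h
    simpa [norm_exp_two_pi_mul_I_div_three] using h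
  have h_vertex : (m 0 * (ζ₃ - 1) + m 1 * (conj ζ₃ - 1)) / (√3 : ℂ) ^ 3 - m 3
      = -(ω ^ 2 * (1 - c₀)) := by
    have h := hcc 2
    rw [sum_erase _ (by simp), Fin.sum_univ_four] at h
    simpa [norm_conj_sub_one, norm_exp_two_pi_mul_I_div_three_sub_one, add_div,
      ← sub_eq_add_neg] using h
  have hr : (√3 : ℂ) ^ 3 ≠ 1 := by
    have : (1 : ℝ) < √3 := by rw [Real.lt_sqrt zero_le_one]; norm_num
    exact_mod_cast (one_lt_pow₀ this three_ne_zero).ne'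
  rcases eq_zero_or_eq_zero_of_central_configuration hr hc₀ h_origin h_vertex with hS | hV
  · refine eq_and_eq_of_mul_add_mul_conj_add_eq_zero exp_two_pi_mul_I_div_three_re ?_ hS
    rw [exp_two_pi_mul_I_div_three_im]; positivity
  · refine absurd hV (mul_sub_one_add_mul_conj_sub_one_ne_zero ?_ ?_)
    · rw [exp_two_pi_mul_I_div_three_re]; norm_num
    · linarith [hm 0, hm 1]

/-- Planar 4-body problem: three bodies at the cube roots of unity and a fourth at the
origin.  If the central configuration equations hold with center of mass `c₀`, then
the three polygon masses are equal. -/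
theorem four_body_equal_masses
    (q₁ q₂ : ℂ)
    (hq₁ : q₁ = Complex.exp (2 * Real.pi * Complex.I / 3))
    (hq₂ : q₂ = Complex.exp (4 * Real.pi * Complex.I / 3))
    (m : Fin 4 → ℝ) (hm : ∀ j, 0 < m j)
    (x : Fin 4 → ℂ) (hx : x = ![q₁, q₂, 1, 0])
    (ω : ℝ) (hω : 0 < ω)
    (c₀ : ℂ)
    (hc₀ : c₀ = ((m 0 : ℂ) * q₁ + (m 1 : ℂ) * q₂ + (m 2 : ℂ) * 1)
        / ((m 0 : ℝ) + m 1 + m 2 + m 3 : ℝ))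
    (hcc : ∀ k : Fin 4,
      ∑ j ∈ Finset.univ.erase k,
          (m j : ℂ) * (x j - x k) / (‖x j - x k‖)^3
        = -((ω : ℂ)^2) * (x k - c₀)) :
    m 0 = m 1 ∧ m 1 = m 2 :=
  four_body_equal_masses_general q₁ q₂ hq₁ hq₂ m hm x hx ω c₀ hc₀ hcc
end
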